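/- arXiv:1907.10590 — 2 statements merged into one kernel-verified Lean document; each statement's English description precedes it below -/
import Mathlib

section
/- For any subset J of candidates and any natural number ℓ with ℓ ≤ min(n, m_J), if y_J > ℓ·q then every execution of the Eneström–Phragmén procedure satisfies n_{J*} ≥ ℓ. -/
/-!
The Eneström–Phragmén procedure.

We fix a number of seats `n ≥ 1`, a finite set `ι` of candidates with capacities
`m i ∈ ℕ∞`, a finite set `κ` of vote types, and for each vote type a positive weight
`v k` and a nonempty approval set `A k`.  The total vote is `V = ∑ k, v k` and the
(Droop) quota is `q = V / (n + 1)`.  An execution of the procedure is recorded by the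
vote weights `vk s k` at each step `s`, the seat counts `seats s i`, and the candidate
`winner s` receiving seat `s + 1` (for `s < n`), subject to the rules of the procedure.
-/

namespace EP

/-- The data of an Eneström–Phragmén election. -/
structure Input (ι κ : Type*) [Fintype ι] [DecidableEq ι] [Fintype κ] : Type _ where
  /-- number of seats -/
  n : ℕ
  hn : 1 ≤ n
  /-- capacities of the candidates -/
  m : ι → ℕ∞
  /-- weights of the vote types -/
  v : κ → ℝ
  hv : ∀ k, 0 < v k
  /-- approval sets of the vote types -/
  A : κ → Finset ι
  hA : ∀ k, (A k).Nonempty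

namespace Input

variable {ι κ : Type*} [Fintype ι] [DecidableEq ι] [Fintype κ] (P : Input ι κ)

/-- Total number of votes. -/
noncomputable def V : ℝ := ∑ k, P.v k

/-- The Droop quota `q = v / (n + 1)`. -/
noncomputable def q : ℝ := P.V / (P.n + 1)

/-- Support of candidate `i` given current vote weights `u`:
`w_i = ∑_{k : i ∈ A_k} u_k`. -/
noncomputable def supp (u : κ → ℝ) (i : ι) : ℝ :=
  ∑ k ∈ Finset.univ.filter (fun k => i ∈ P.A k), u k

/-- Standing assumption: at least `n` candidates have positive initial support. -/
def enough : Prop := P.n ≤ {i : ι | 0 < P.supp P.v i}.ncard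

end Input

/-- An execution of the Eneström–Phragmén procedure: at each step `s < n`,
seat `s + 1` is given to an eligible candidate `winner s` of maximal support, and the
votes approving the winner are reduced according to the quota rule. -/
structure Exec {ι κ : Type*} [Fintype ι] [DecidableEq ι] [Fintype κ]
    (P : Input ι κ) : Type _ where
  /-- the vote weights `v_k[s]` -/
  vk : ℕ → κ → ℝ
  /-- the seat counts `n_i[s]` -/
  seats : ℕ → ι → ℕ
  /-- the candidate receiving seat `s + 1` -/
  winner : ℕ → ι
  vk_init : vk 0 = P.v
  seats_init : ∀ i, seats 0 i = 0
  /-- the winner is eligible -/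
  winner_elig : ∀ s < P.n, (seats s (winner s) : ℕ∞) < P.m (winner s)
  /-- the winner maximizes the support among eligible candidates -/
  winner_max : ∀ s < P.n, ∀ i : ι, (seats s i : ℕ∞) < P.m i →
    P.supp (vk s) i ≤ P.supp (vk s) (winner s)
  seats_succ : ∀ s < P.n, ∀ i : ι,
    seats (s + 1) i = if i = winner s then seats s i + 1 else seats s i
  /-- vote reduction when the winner has at least a quota -/
  vk_succ_ge : ∀ s < P.n, ∀ k, winner s ∈ P.A k → P.q ≤ P.supp (vk s) (winner s) →
    vk (s + 1) k = (1 - P.q / P.supp (vk s) (winner s)) * vk s k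
  /-- vote exhaustion when the winner has less than a quota -/
  vk_succ_lt : ∀ s < P.n, ∀ k, winner s ∈ P.A k → P.supp (vk s) (winner s) < P.q →
    vk (s + 1) k = 0
  /-- votes not approving the winner are unchanged -/
  vk_succ_out : ∀ s < P.n, ∀ k, winner s ∉ P.A k → vk (s + 1) k = vk s k

end EP


/-!
Suppose the candidates in `J* = ⋃ {A_k : A_k ⊇ J}` end up with fewer than `ℓ` seats. Then
at every step some candidate of `J` is still eligible, and it is approved by every vote
type approving all of `J`, so the winner's support is at least the remaining weight `Y` of
those votes. That weight starts at `y_J > ℓ q` and loses at most `q` per seat won in `J*`,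
so it stays above `q`: every step is a quota step, and the total remaining weight drops by
exactly `q` each time, to `v - n q = q` after `n` steps. But then `q < Y ≤ q`.
-/

namespace EP

namespace Input

variable {ι κ : Type*} [Fintype ι] [DecidableEq ι] [Fintype κ] (P : Input ι κ)

lemma q_nonneg : 0 ≤ P.q :=
  div_nonneg (Finset.sum_nonneg fun k _ => (P.hv k).le) (by positivity)

lemma V_eq_succ_mul_q : P.V = (P.n + 1) * P.q := by
  rw [q]
  field_simp

end Input

namespace Exec

variable {ι κ : Type*} [Fintype ι] [DecidableEq ι] [Fintype κ] {P : Input ι κ} (E : Exec P)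

/-- The winner of step `s` reaches the quota, so the votes approving it are scaled down
rather than exhausted. -/
def IsQuotaStep (s : ℕ) : Prop := P.q ≤ P.supp (E.vk s) (E.winner s)

lemma sum_seats_succ (S : Finset ι) {s : ℕ} (hs : s < P.n) :
    ∑ i ∈ S, E.seats (s + 1) i = ∑ i ∈ S, E.seats s i + if E.winner s ∈ S then 1 else 0 := by
  rw [← Finset.sum_ite_eq' S (E.winner s) (fun _ => 1), ← Finset.sum_add_distrib]
  refine Finset.sum_congr rfl fun i _ => ?_
  rw [E.seats_succ s hs i]
  split_ifs <;> rfl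

lemma sum_seats_mono (S : Finset ι) {a b : ℕ} (hab : a ≤ b) (hb : b ≤ P.n) :
    ∑ i ∈ S, E.seats a i ≤ ∑ i ∈ S, E.seats b i := by
  induction b, hab using Nat.le_induction with
  | base => rfl
  | succ b _ ih =>
    rw [E.sum_seats_succ S hb]
    exact (ih (Nat.le_of_succ_le hb)).trans (Nat.le_add_right _ _)

lemma vk_nonneg {s : ℕ} (hs : s ≤ P.n) (k : κ) : 0 ≤ E.vk s k := by
  induction s with
  | zero => rw [E.vk_init]; exact (P.hv k).le
  | succ s ih =>
    have hs : s < P.n := hs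
    have hk := ih hs.le
    by_cases hw : E.winner s ∈ P.A k
    · by_cases hquota : E.IsQuotaStep s
      · rw [E.vk_succ_ge s hs k hw hquota]
        have hfrac : P.q / P.supp (E.vk s) (E.winner s) ≤ 1 :=
          div_le_one_of_le₀ hquota (P.q_nonneg.trans hquota)
        exact mul_nonneg (sub_nonneg.2 hfrac) hk
      · rw [E.vk_succ_lt s hs k hw (not_le.1 hquota)]
    · rw [E.vk_succ_out s hs k hw]
      exact hk

lemma sum_vk_succ_of_isQuotaStep {s : ℕ} (hs : s < P.n) (hquota : E.IsQuotaStep s)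
    (K : Finset κ) :
    ∑ k ∈ K, E.vk (s + 1) k = ∑ k ∈ K, E.vk s k -
      P.q / P.supp (E.vk s) (E.winner s) *
        ∑ k ∈ K.filter (fun k => E.winner s ∈ P.A k), E.vk s k := by
  rw [Finset.mul_sum, Finset.sum_filter, ← Finset.sum_sub_distrib]
  refine Finset.sum_congr rfl fun k _ => ?_
  split_ifs with hw
  · rw [E.vk_succ_ge s hs k hw hquota]
    ring
  · rw [E.vk_succ_out s hs k hw, sub_zero]

lemma sum_vk_succ_of_forall_notMem {s : ℕ} (hs : s < P.n) (K : Finset κ)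
    (hK : ∀ k ∈ K, E.winner s ∉ P.A k) :
    ∑ k ∈ K, E.vk (s + 1) k = ∑ k ∈ K, E.vk s k :=
  Finset.sum_congr rfl fun k hk => E.vk_succ_out s hs k (hK k hk)

/-- `w = 0` forces `q = 0` at a quota step, so the junk value `q / 0 = 0` is harmless. -/
lemma quota_div_supp_mul_supp {s : ℕ} (hquota : E.IsQuotaStep s) :
    P.q / P.supp (E.vk s) (E.winner s) * P.supp (E.vk s) (E.winner s) = P.q :=
  div_mul_cancel_of_imp fun h => le_antisymm (h ▸ hquota) P.q_nonneg

lemma sum_vk_succ_of_isQuotaStep_univ {s : ℕ} (hs : s < P.n) (hquota : E.IsQuotaStep s) :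
    ∑ k, E.vk (s + 1) k = ∑ k, E.vk s k - P.q := by
  rw [E.sum_vk_succ_of_isQuotaStep hs hquota]
  exact congrArg (fun x => ∑ k, E.vk s k - x) (E.quota_div_supp_mul_supp hquota)

lemma sum_vk_sub_q_le_sum_vk_succ {s : ℕ} (hs : s < P.n) (hquota : E.IsQuotaStep s)
    (K : Finset κ) :
    ∑ k ∈ K, E.vk s k - P.q ≤ ∑ k ∈ K, E.vk (s + 1) k := by
  set w := P.supp (E.vk s) (E.winner s)
  have hsub : ∑ k ∈ K.filter (fun k => E.winner s ∈ P.A k), E.vk s k ≤ w :=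
    Finset.sum_le_sum_of_subset_of_nonneg (Finset.filter_subset_filter _ K.subset_univ)
      fun k _ _ => E.vk_nonneg hs.le k
  have hscaled : P.q / w * ∑ k ∈ K.filter (fun k => E.winner s ∈ P.A k), E.vk s k ≤ P.q :=
    calc _ ≤ P.q / w * w := mul_le_mul_of_nonneg_left hsub
            (div_nonneg P.q_nonneg (P.q_nonneg.trans hquota))
      _ = P.q := E.quota_div_supp_mul_supp hquota
  rw [E.sum_vk_succ_of_isQuotaStep hs hquota]
  linarith

lemma sum_vk_le_supp_winner {s : ℕ} (hs : s < P.n) (K : Finset κ) {i : ι}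
    (hi : (E.seats s i : ℕ∞) < P.m i) (hiK : ∀ k ∈ K, i ∈ P.A k) :
    ∑ k ∈ K, E.vk s k ≤ P.supp (E.vk s) (E.winner s) :=
  calc ∑ k ∈ K, E.vk s k ≤ P.supp (E.vk s) i :=
        Finset.sum_le_sum_of_subset_of_nonneg
          (fun k hk => Finset.mem_filter.2 ⟨Finset.mem_univ k, hiK k hk⟩)
          fun k _ _ => E.vk_nonneg hs.le k
    _ ≤ P.supp (E.vk s) (E.winner s) := E.winner_max s hs i hi

lemma sum_vk_eq_of_forall_isQuotaStep {s : ℕ} (hs : s ≤ P.n)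
    (hquota : ∀ r < s, E.IsQuotaStep r) :
    ∑ k, E.vk s k = P.V - s * P.q := by
  induction s with
  | zero => simp [E.vk_init, Input.V]
  | succ s ih =>
    rw [E.sum_vk_succ_of_isQuotaStep_univ hs (hquota s s.lt_succ_self),
      ih (Nat.le_of_succ_le hs) fun r hr => hquota r (hr.trans s.lt_succ_self)]
    push_cast
    ring

/-- Every seat won by a candidate of `S` costs the votes of `K` at most one quota. -/
lemma sum_v_sub_le_sum_vk (K : Finset κ) (S : Finset ι) (hKS : ∀ k ∈ K, P.A k ⊆ S)
    {s : ℕ} (hs : s ≤ P.n) (hquota : ∀ r < s, E.IsQuotaStep r) :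
    ∑ k ∈ K, P.v k - (∑ i ∈ S, E.seats s i : ℕ) * P.q ≤ ∑ k ∈ K, E.vk s k := by
  induction s with
  | zero => simp [E.vk_init, E.seats_init]
  | succ s ih =>
    have hs : s < P.n := hs
    have ih := ih hs.le fun r hr => hquota r (hr.trans s.lt_succ_self)
    rw [E.sum_seats_succ S hs]
    by_cases hwS : E.winner s ∈ S
    · have := E.sum_vk_sub_q_le_sum_vk_succ hs (hquota s s.lt_succ_self) K
      rw [if_pos hwS, Nat.cast_succ]
      linarith
    · rw [if_neg hwS, add_zero, E.sum_vk_succ_of_forall_notMem hs K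
        fun k hk hw => hwS (hKS k hk hw)]
      exact ih

lemma exists_eligible_of_sum_seats_lt {J : Finset ι} {ℓ : ℕ}
    (hℓm : (ℓ : ℕ∞) ≤ ∑ i ∈ J, P.m i) {s : ℕ} (hJ : ∑ i ∈ J, E.seats s i < ℓ) :
    ∃ i ∈ J, (E.seats s i : ℕ∞) < P.m i := by
  by_contra! hfull
  have : (ℓ : ℕ∞) ≤ ((∑ i ∈ J, E.seats s i : ℕ) : ℕ∞) := by
    rw [Nat.cast_sum]
    exact hℓm.trans (Finset.sum_le_sum hfull)
  exact absurd (Nat.cast_le.1 this) (not_le.2 hJ)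

lemma q_lt_sum_vk (K : Finset κ) (S : Finset ι) (hKS : ∀ k ∈ K, P.A k ⊆ S) {ℓ : ℕ}
    (hy : (ℓ : ℝ) * P.q < ∑ k ∈ K, P.v k) (hS : ∑ i ∈ S, E.seats P.n i < ℓ)
    {s : ℕ} (hs : s ≤ P.n) (hquota : ∀ r < s, E.IsQuotaStep r) :
    P.q < ∑ k ∈ K, E.vk s k := by
  have hlt : ((∑ i ∈ S, E.seats s i : ℕ) : ℝ) + 1 ≤ ℓ := by
    exact_mod_cast (E.sum_seats_mono S hs le_rfl).trans_lt hS
  have := E.sum_v_sub_le_sum_vk K S hKS hs hquota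
  nlinarith [P.q_nonneg]

lemma forall_isQuotaStep_of_sum_seats_lt (J : Finset ι) (K : Finset κ) (S : Finset ι)
    (hJS : J ⊆ S) (hKS : ∀ k ∈ K, P.A k ⊆ S) (hKJ : ∀ k ∈ K, J ⊆ P.A k) {ℓ : ℕ}
    (hℓm : (ℓ : ℕ∞) ≤ ∑ i ∈ J, P.m i) (hy : (ℓ : ℝ) * P.q < ∑ k ∈ K, P.v k)
    (hS : ∑ i ∈ S, E.seats P.n i < ℓ) :
    ∀ r < P.n, E.IsQuotaStep r := by
  intro r
  induction r using Nat.strong_induction_on with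
  | _ r ih =>
    intro hr
    have hquota : ∀ r' < r, E.IsQuotaStep r' := fun r' hr' => ih r' hr' (hr'.trans hr)
    have hJ : ∑ i ∈ J, E.seats r i < ℓ :=
      ((Finset.sum_le_sum_of_subset hJS).trans (E.sum_seats_mono S hr.le le_rfl)).trans_lt hS
    obtain ⟨i, hiJ, hi⟩ := E.exists_eligible_of_sum_seats_lt hℓm hJ
    exact (E.q_lt_sum_vk K S hKS hy hS hr.le hquota).le.trans
      (E.sum_vk_le_supp_winner hr K hi fun k hk => hKJ k hk hiJ)

theorem le_sum_seats (J : Finset ι) (K : Finset κ) (S : Finset ι)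
    (hJS : J ⊆ S) (hKS : ∀ k ∈ K, P.A k ⊆ S) (hKJ : ∀ k ∈ K, J ⊆ P.A k) {ℓ : ℕ}
    (hℓm : (ℓ : ℕ∞) ≤ ∑ i ∈ J, P.m i) (hy : (ℓ : ℝ) * P.q < ∑ k ∈ K, P.v k) :
    ℓ ≤ ∑ i ∈ S, E.seats P.n i := by
  by_contra! hS
  have hquota := E.forall_isQuotaStep_of_sum_seats_lt J K S hJS hKS hKJ hℓm hy hS
  have hgt := E.q_lt_sum_vk K S hKS hy hS le_rfl hquota
  have hle : ∑ k ∈ K, E.vk P.n k ≤ ∑ k, E.vk P.n k :=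
    Finset.sum_le_sum_of_subset_of_nonneg K.subset_univ fun k _ _ => E.vk_nonneg le_rfl k
  rw [E.sum_vk_eq_of_forall_isQuotaStep le_rfl hquota, P.V_eq_succ_mul_q] at hle
  linarith

end Exec

end EP

open EP in
theorem enestrom_phragmen_pjr_proportionality_general
    {ι κ : Type*} [Fintype ι] [DecidableEq ι] [Fintype κ]
    (P : Input ι κ)
    (J : Finset ι) (ℓ : ℕ) (hℓm : (ℓ : ℕ∞) ≤ ∑ i ∈ J, P.m i)
    (hyJ : (ℓ : ℝ) * P.q < ∑ k ∈ Finset.univ.filter (fun k => J ⊆ P.A k), P.v k)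
    (E : Exec P) :
    ℓ ≤ ∑ i ∈ Finset.univ.filter (fun i => ∃ k, J ⊆ P.A k ∧ i ∈ P.A k),
        E.seats P.n i := by
  obtain ⟨k₀, hk₀⟩ : (Finset.univ.filter fun k => J ⊆ P.A k).Nonempty :=
    Finset.nonempty_of_sum_ne_zero
      ((mul_nonneg (Nat.cast_nonneg ℓ) P.q_nonneg).trans_lt hyJ).ne'
  have hJk₀ : J ⊆ P.A k₀ := (Finset.mem_filter.1 hk₀).2
  refine E.le_sum_seats J _ _ (fun i hi => ?_) (fun k hk i hi => ?_)
    (fun k hk => (Finset.mem_filter.1 hk).2) hℓm hyJ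
  · exact Finset.mem_filter.2 ⟨Finset.mem_univ i, k₀, hJk₀, hJk₀ hi⟩
  · exact Finset.mem_filter.2 ⟨Finset.mem_univ i, k, (Finset.mem_filter.1 hk).2, hi⟩

open EP in
/-- Theorem 2 of the paper: for any subset `J` of candidates and any
`ℓ ≤ min (n, m_J)`, if `y_J > ℓ q` then every execution gives `n_{J*} ≥ ℓ`, where
`y_J` is the total weight of the votes approving all of `J` and
`J* = ⋃ {A_k : A_k ⊇ J}`. -/
theorem enestrom_phragmen_pjr_proportionality
    {ι κ : Type*} [Fintype ι] [DecidableEq ι] [Fintype κ]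
    (P : Input ι κ) (henough : P.enough)
    (J : Finset ι) (ℓ : ℕ) (hℓn : ℓ ≤ P.n) (hℓm : (ℓ : ℕ∞) ≤ ∑ i ∈ J, P.m i)
    (hyJ : (ℓ : ℝ) * P.q < ∑ k ∈ Finset.univ.filter (fun k => J ⊆ P.A k), P.v k)
    (E : Exec P) :
    ℓ ≤ ∑ i ∈ Finset.univ.filter (fun i => ∃ k, J ⊆ P.A k ∧ i ∈ P.A k),
        E.seats P.n i :=
  enestrom_phragmen_pjr_proportionality_general P J ℓ hℓm hyJ E
end

section
/- In the two-party setting with ζ[0] > 0, in any execution of the Eneström–Phragmén procedure: if seat s+1 is allocated to A and seat s+2 is allocated to B (with s+3 ≤ n), then α[s+2] > β[s+2], so seat s+3 is necessarily allocated to A; and symmetrically with A and B interchanged. -/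
/-!
The Eneström–Phragmén procedure in the two-party setting: the candidates are two
parties `A` and `B` of unlimited capacity, and the vote types are `{A}`, `{B}` and
`{A,B}` with step-`s` weights (divided by the total vote `v`) denoted `α s`, `β s`
and `ζ s` respectively; `ρ n = q / v = 1 / (n + 1)` is the normalized Droop quota.
At step `s < n`, seat `s + 1` goes to `A` (recorded by `toA s = true`) or to `B`
(`toA s = false`); the winner must maximize the support (`α s + ζ s` for `A`,
`β s + ζ s` for `B`), and the votes approving the winner are reduced according
to the quota rule.
-/

namespace EP2

/-- The normalized Droop quota `ρ = q / v = 1 / (n + 1)`. -/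
noncomputable def ρ (n : ℕ) : ℝ := 1 / (n + 1)

/-- An execution of the Eneström–Phragmén procedure in the two-party setting, with
`n` seats and initial normalized weights `α0, β0, ζ0` of the vote types
`{A}`, `{B}`, `{A,B}`. -/
structure TPExec (n : ℕ) (α0 β0 ζ0 : ℝ) : Type where
  /-- normalized weight of the votes approving only `A` -/
  α : ℕ → ℝ
  /-- normalized weight of the votes approving only `B` -/
  β : ℕ → ℝ
  /-- normalized weight of the votes approving both `A` and `B` -/
  ζ : ℕ → ℝ
  /-- `toA s = true` iff seat `s + 1` is allocated to party `A` -/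
  toA : ℕ → Bool
  init_α : α 0 = α0
  init_β : β 0 = β0
  init_ζ : ζ 0 = ζ0
  /-- the winner maximizes the support: if `A` wins then `β s + ζ s ≤ α s + ζ s` -/
  choiceA : ∀ s < n, toA s = true → β s ≤ α s
  /-- the winner maximizes the support: if `B` wins then `α s + ζ s ≤ β s + ζ s` -/
  choiceB : ∀ s < n, toA s = false → α s ≤ β s
  stepA_ge : ∀ s < n, toA s = true → ρ n ≤ α s + ζ s →
    α (s + 1) = (1 - ρ n / (α s + ζ s)) * α s ∧
    ζ (s + 1) = (1 - ρ n / (α s + ζ s)) * ζ s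
  stepA_lt : ∀ s < n, toA s = true → α s + ζ s < ρ n →
    α (s + 1) = 0 ∧ ζ (s + 1) = 0
  stepA_β : ∀ s < n, toA s = true → β (s + 1) = β s
  stepB_ge : ∀ s < n, toA s = false → ρ n ≤ β s + ζ s →
    β (s + 1) = (1 - ρ n / (β s + ζ s)) * β s ∧
    ζ (s + 1) = (1 - ρ n / (β s + ζ s)) * ζ s
  stepB_lt : ∀ s < n, toA s = false → β s + ζ s < ρ n →
    β (s + 1) = 0 ∧ ζ (s + 1) = 0
  stepB_α : ∀ s < n, toA s = false → α (s + 1) = α s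

/-- Number of seats allocated to party `A` during steps `a, …, b - 1`. -/
def cntA {n : ℕ} {α0 β0 ζ0 : ℝ} (E : TPExec n α0 β0 ζ0) (a b : ℕ) : ℕ :=
  ((Finset.Ico a b).filter (fun s => E.toA s = true)).card

/-- Number of seats allocated to party `B` during steps `a, …, b - 1`. -/
def cntB {n : ℕ} {α0 β0 ζ0 : ℝ} (E : TPExec n α0 β0 ζ0) (a b : ℕ) : ℕ :=
  ((Finset.Ico a b).filter (fun s => E.toA s = false)).card

/-- Total number of seats allocated to party `A`. -/
def nA {n : ℕ} {α0 β0 ζ0 : ℝ} (E : TPExec n α0 β0 ζ0) : ℕ := cntA E 0 n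

end EP2

/-!
While both parties keep winning with support above the quota, every weight stays positive
and each seat removes exactly `ρ` from the total, so after `t` seats the total is
`1 - t ρ = (n + 1 - t) ρ`; as the winner's support is at least half the total, it exceeds
`ρ` at every seat but the last. A seat won by `A` with support `W` scales `α` and `ζ` by
`1 - ρ / W`. If `B` then wins with support `W'`, it scales `β` by `1 - ρ / W'`, and
`W' = β + (1 - ρ / W) ζ < β + ζ ≤ α + ζ = W`: so `β` shrinks by the stronger factor, and
`β ≤ α` before the two seats becomes `β < α` after them.
-/

namespace EP2

lemma rho_pos (n : ℕ) : 0 < ρ n := by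
  rw [ρ]; positivity

lemma mul_rho_le_one_sub_mul_rho {n k t : ℕ} (h : k + t ≤ n + 1) :
    (k : ℝ) * ρ n ≤ 1 - t * ρ n := by
  have hρ : ((n : ℝ) + 1) * ρ n = 1 := by rw [ρ]; field_simp
  have hkt : (k : ℝ) + t ≤ n + 1 := by exact_mod_cast h
  nlinarith [rho_pos n]

variable {n : ℕ} {α0 β0 ζ0 : ℝ}

noncomputable def TPExec.swap (E : TPExec n α0 β0 ζ0) : TPExec n β0 α0 ζ0 where
  α := E.β
  β := E.α
  ζ := E.ζ
  toA s := !E.toA s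
  init_α := E.init_β
  init_β := E.init_α
  init_ζ := E.init_ζ
  choiceA s hs h := E.choiceB s hs (by simpa using h)
  choiceB s hs h := E.choiceA s hs (by simpa using h)
  stepA_ge s hs h := E.stepB_ge s hs (by simpa using h)
  stepA_lt s hs h := E.stepB_lt s hs (by simpa using h)
  stepA_β s hs h := E.stepB_α s hs (by simpa using h)
  stepB_ge s hs h := E.stepA_ge s hs (by simpa using h)
  stepB_lt s hs h := E.stepA_lt s hs (by simpa using h)
  stepB_α s hs h := E.stepA_β s hs (by simpa using h)

@[simp]
lemma TPExec.swap_toA (E : TPExec n α0 β0 ζ0) (s : ℕ) : E.swap.toA s = !E.toA s := rfl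

namespace TPExec

variable (E : TPExec n α0 β0 ζ0)

lemma toA_eq_true_of_β_lt_α {s : ℕ} (hs : s < n) (h : E.β s < E.α s) : E.toA s = true := by
  by_contra hB
  exact h.not_ge (E.choiceB s hs (by simpa using hB))

def Invariant (t : ℕ) : Prop :=
  0 < E.α t ∧ 0 < E.β t ∧ 0 < E.ζ t ∧ E.α t + E.β t + E.ζ t = 1 - t * ρ n

lemma invariant_swap_iff {t : ℕ} : E.swap.Invariant t ↔ E.Invariant t := by
  simp only [Invariant, swap]
  rw [add_comm (E.β t)]
  tauto

variable {E}

lemma Invariant.rho_lt_support_of_toA {t : ℕ} (h : E.Invariant t) (ht : t + 2 ≤ n)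
    (hA : E.toA t = true) : ρ n < E.α t + E.ζ t := by
  obtain ⟨-, -, hζ, htot⟩ := h
  have hβα := E.choiceA t (by omega) hA
  have h3 := mul_rho_le_one_sub_mul_rho (n := n) (k := 3) (t := t) (by omega)
  push_cast at h3
  nlinarith [rho_pos n]

lemma Invariant.succ_of_toA {t : ℕ} (h : E.Invariant t) (ht : t + 2 ≤ n)
    (hA : E.toA t = true) :
    E.α (t + 1) = (1 - ρ n / (E.α t + E.ζ t)) * E.α t ∧
      E.ζ (t + 1) = (1 - ρ n / (E.α t + E.ζ t)) * E.ζ t ∧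
      0 < 1 - ρ n / (E.α t + E.ζ t) ∧ E.Invariant (t + 1) := by
  have hW := h.rho_lt_support_of_toA ht hA
  obtain ⟨hα, hβ, hζ, htot⟩ := h
  obtain ⟨hα', hζ'⟩ := E.stepA_ge t (by omega) hA hW.le
  have hβ' := E.stepA_β t (by omega) hA
  have hc : 0 < 1 - ρ n / (E.α t + E.ζ t) := by
    rw [sub_pos, div_lt_one (by positivity)]; exact hW
  have hscaled : (1 - ρ n / (E.α t + E.ζ t)) * (E.α t + E.ζ t) = E.α t + E.ζ t - ρ n := by
    field_simp
  refine ⟨hα', hζ', hc, by rw [hα']; positivity, by rw [hβ']; exact hβ,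
    by rw [hζ']; positivity, ?_⟩
  rw [hα', hβ', hζ']
  push_cast
  linear_combination hscaled + htot

lemma Invariant.succ {t : ℕ} (h : E.Invariant t) (ht : t + 2 ≤ n) : E.Invariant (t + 1) := by
  cases hA : E.toA t
  · rw [← invariant_swap_iff] at h ⊢
    exact (h.succ_of_toA ht (by simp [hA])).2.2.2
  · exact (h.succ_of_toA ht hA).2.2.2

lemma invariant (hα0 : 0 < α0) (hβ0 : 0 < β0) (hζ0 : 0 < ζ0) (hsum : α0 + β0 + ζ0 = 1)
    {t : ℕ} (ht : t + 1 ≤ n) : E.Invariant t := by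
  induction t with
  | zero =>
    simp only [Invariant, E.init_α, E.init_β, E.init_ζ, hsum]
    exact ⟨hα0, hβ0, hζ0, by simp⟩
  | succ t ih => exact (ih (by omega)).succ (by omega)

lemma Invariant.β_lt_α_of_toA_of_toA_eq_false {s : ℕ} (h : E.Invariant s) (hs : s + 3 ≤ n)
    (hA : E.toA s = true) (hB : E.toA (s + 1) = false) : E.β (s + 2) < E.α (s + 2) := by
  obtain ⟨hα1, hζ1, hc, h1⟩ := h.succ_of_toA (by omega) hA
  have hβ1 := E.stepA_β s (by omega) hA
  set c := 1 - ρ n / (E.α s + E.ζ s)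
  have hW' : ρ n < E.β (s + 1) + E.ζ (s + 1) := by
    rw [← invariant_swap_iff] at h1
    exact h1.rho_lt_support_of_toA (by omega) (by simp [hB])
  obtain ⟨hβ2, -⟩ := E.stepB_ge (s + 1) (by omega) hB hW'.le
  have hα2 := E.stepB_α (s + 1) (by omega) hB
  obtain ⟨hα, hβ, hζ, -⟩ := h
  have hc1 : c < 1 := by
    have : 0 < ρ n / (E.α s + E.ζ s) := div_pos (rho_pos n) (by positivity)
    linarith
  have hsupport : E.β (s + 1) + E.ζ (s + 1) < E.α s + E.ζ s := by
    rw [hβ1, hζ1]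
    nlinarith [E.choiceA s (by omega) hA]
  set c' := 1 - ρ n / (E.β (s + 1) + E.ζ (s + 1))
  have hc' : c' < c := by
    have := div_lt_div_of_pos_left (rho_pos n) (by linarith [rho_pos n]) hsupport
    linarith
  rw [hβ2, hα2, hα1, hβ1]
  calc c' * E.β s < c * E.β s :=
        mul_lt_mul_of_pos_right hc' hβ
    _ ≤ c * E.α s := mul_le_mul_of_nonneg_left (E.choiceA s (by omega) hA) hc.le

end TPExec

end EP2

open EP2 in
theorem enestrom_phragmen_two_party_no_two_consecutive_to_other_general
    (n : ℕ) (α0 β0 ζ0 : ℝ)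
    (hα0 : 0 < α0) (hβ0 : 0 < β0) (hζ0 : 0 < ζ0) (hsum : α0 + β0 + ζ0 = 1)
    (E : TPExec n α0 β0 ζ0) (s : ℕ) (hs : s + 3 ≤ n) :
    (E.toA s = true → E.toA (s + 1) = false →
      E.β (s + 2) < E.α (s + 2) ∧ E.toA (s + 2) = true) ∧
    (E.toA s = false → E.toA (s + 1) = true →
      E.α (s + 2) < E.β (s + 2) ∧ E.toA (s + 2) = false) := by
  have h := E.invariant hα0 hβ0 hζ0 hsum (t := s) (by omega)
  constructor
  · intro hA hB
    have hlt := h.β_lt_α_of_toA_of_toA_eq_false hs hA hB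
    exact ⟨hlt, E.toA_eq_true_of_β_lt_α (by omega) hlt⟩
  · intro hB hA
    rw [← TPExec.invariant_swap_iff] at h
    have hlt := h.β_lt_α_of_toA_of_toA_eq_false hs (by simp [hB]) (by simp [hA])
    have hB2 := E.swap.toA_eq_true_of_β_lt_α (by omega) hlt
    exact ⟨hlt, by simpa using hB2⟩

open EP2 in
/-- Lemma 2 of the paper: in the two-party setting with `ζ[0] > 0`, in
any execution, if seat `s+1` goes to `A` and seat `s+2` goes to `B` (with `s+3 ≤ n`),
then `α[s+2] > β[s+2]`, so seat `s+3` necessarily goes to `A`; and symmetrically with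
`A` and `B` interchanged. -/
theorem enestrom_phragmen_two_party_no_two_consecutive_to_other
    (n : ℕ) (hn : 1 ≤ n) (α0 β0 ζ0 : ℝ)
    (hα0 : 0 < α0) (hβ0 : 0 < β0) (hζ0 : 0 < ζ0) (hsum : α0 + β0 + ζ0 = 1)
    (E : TPExec n α0 β0 ζ0) (s : ℕ) (hs : s + 3 ≤ n) :
    (E.toA s = true → E.toA (s + 1) = false →
      E.β (s + 2) < E.α (s + 2) ∧ E.toA (s + 2) = true) ∧
    (E.toA s = false → E.toA (s + 1) = true →
      E.α (s + 2) < E.β (s + 2) ∧ E.toA (s + 2) = false) :=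
  enestrom_phragmen_two_party_no_two_consecutive_to_other_general n α0 β0 ζ0 hα0 hβ0 hζ0 hsum E s hs
end
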